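/- Let F and G be compact hereditary families on an infinite cardinal κ such that every singleton {α} (α < κ) belongs to the closure of F^MAX in 2^κ. If T : X_F* → X_G* is a linear map that is continuous from the weak* topology to the weak* topology and maps extreme points of the closed unit ball of X_F* to extreme points of the closed unit ball of X_G*, then for every α < κ there exist s_α ∈ G and scalars (θ_ξ^α)_{ξ∈s_α} with |θ_ξ^α| = 1 such that T(e_α*) = Σ_{ξ∈s_α} θ_ξ^α e_ξ*. -/

import Mathlib

open scoped Classical

noncomputable section

/-- Characteristic function of a finite set, as an element of the Cantor cube `2^ι`. -/
def chi {ι : Type*} (s : Finset ι) : ι → Bool := fun a => decide (a ∈ s)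

/-- The copy of a collection of finite sets inside the Cantor cube `2^ι`. -/
def chiImg {ι : Type*} (F : Set (Finset ι)) : Set (ι → Bool) := chi '' F

/-- `F` is a family: it contains the empty set and all singletons. -/
def IsFam {ι : Type*} (F : Set (Finset ι)) : Prop := ∅ ∈ F ∧ ∀ a : ι, {a} ∈ F

/-- `F` is hereditary: it is closed under subsets. -/
def IsHereditary {ι : Type*} (F : Set (Finset ι)) : Prop :=
  ∀ ⦃s t : Finset ι⦄, s ⊆ t → t ∈ F → s ∈ F

/-- `F` is compact: its copy in the Cantor cube `2^ι` is closed
(equivalently, compact). -/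
def IsCompactFam {ι : Type*} (F : Set (Finset ι)) : Prop := IsClosed (chiImg F)

/-- The set of maximal elements of `F` with respect to inclusion. -/
def famMAX {ι : Type*} (F : Set (Finset ι)) : Set (Finset ι) :=
  {s ∈ F | ∀ t ∈ F, s ⊆ t → s = t}

/-- The image `{π[s] : s ∈ F}` of a collection of finite sets under a permutation of the
index set. -/
def permImg {ι : Type*} (π : Equiv.Perm ι) (F : Set (Finset ι)) : Set (Finset ι) :=
  (fun s => Finset.image π s) '' F

variable {ι : Type*}

/-- A family of finite subsets of `ι`, containing the empty set and all singletons. -/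
structure CombFamily (ι : Type*) where
  sets : Set (Finset ι)
  empty_mem : ∅ ∈ sets
  singleton_mem : ∀ a : ι, {a} ∈ sets

variable (𝕂 : Type*) [RCLike 𝕂]

/-- The set of candidate values for the norm of `x` in the combinatorial space. -/
def normValues (F : CombFamily ι) (x : ι →₀ 𝕂) : Set ℝ :=
  (fun s : Finset ι => ∑ a ∈ s, ‖x a‖) '' F.sets

lemma normValues_nonempty (F : CombFamily ι) (x : ι →₀ 𝕂) : (normValues 𝕂 F x).Nonempty :=
  ⟨∑ a ∈ (∅ : Finset ι), ‖x a‖, ⟨∅, F.empty_mem, rfl⟩⟩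

lemma normValues_bddAbove (F : CombFamily ι) (x : ι →₀ 𝕂) : BddAbove (normValues 𝕂 F x) := by
  refine ⟨∑ a ∈ x.support, ‖x a‖, ?_⟩
  rintro r ⟨s, _, rfl⟩
  dsimp only
  have h1 : ∑ a ∈ s, ‖x a‖ = ∑ a ∈ s ∩ x.support, ‖x a‖ := by
    refine (Finset.sum_subset (Finset.inter_subset_left) ?_).symm
    intro a ha hna
    have : x a = 0 := by
      by_contra h
      exact hna (Finset.mem_inter.2 ⟨ha, Finsupp.mem_support_iff.2 h⟩)
    simp [this]
  rw [h1]
  exact Finset.sum_le_sum_of_subset_of_nonneg Finset.inter_subset_right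
    (fun a _ _ => norm_nonneg _)

/-- The norm of the combinatorial space `X_F`:
`‖x‖ = sup { ∑_{a ∈ s} |x a| : s ∈ F }`. -/
def combNorm (F : CombFamily ι) (x : ι →₀ 𝕂) : ℝ := sSup (normValues 𝕂 F x)

lemma sum_le_combNorm (F : CombFamily ι) (x : ι →₀ 𝕂) {s : Finset ι} (hs : s ∈ F.sets) :
    ∑ a ∈ s, ‖x a‖ ≤ combNorm 𝕂 F x :=
  le_csSup (normValues_bddAbove 𝕂 F x) ⟨s, hs, rfl⟩

lemma combNorm_le (F : CombFamily ι) (x : ι →₀ 𝕂) {c : ℝ}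
    (h : ∀ s ∈ F.sets, ∑ a ∈ s, ‖x a‖ ≤ c) : combNorm 𝕂 F x ≤ c :=
  csSup_le (normValues_nonempty 𝕂 F x) (by rintro r ⟨s, hs, rfl⟩; exact h s hs)

/-- The space of finitely supported functions `ι →₀ 𝕂`, regarded as a normed space
with the norm induced by the family `F`. -/
def C00 (F : CombFamily ι) (𝕂 : Type*) [RCLike 𝕂] : Type _ := ι →₀ 𝕂

variable {𝕂} in
/-- The identity map from `C00 F 𝕂` to `ι →₀ 𝕂`. -/
def C00.toFinsupp {F : CombFamily ι} (x : C00 F 𝕂) : ι →₀ 𝕂 := x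

variable {𝕂} in
/-- The identity map from `ι →₀ 𝕂` to `C00 F 𝕂`. -/
def C00.of (F : CombFamily ι) (x : ι →₀ 𝕂) : C00 F 𝕂 := x

instance (F : CombFamily ι) : AddCommGroup (C00 F 𝕂) :=
  inferInstanceAs (AddCommGroup (ι →₀ 𝕂))

instance (F : CombFamily ι) : Module 𝕂 (C00 F 𝕂) :=
  inferInstanceAs (Module 𝕂 (ι →₀ 𝕂))

variable {𝕂}

lemma C00.toFinsupp_add {F : CombFamily ι} (x y : C00 F 𝕂) :
    (x + y).toFinsupp = x.toFinsupp + y.toFinsupp := rfl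

lemma C00.toFinsupp_neg {F : CombFamily ι} (x : C00 F 𝕂) :
    (-x).toFinsupp = -x.toFinsupp := rfl

lemma C00.toFinsupp_smul {F : CombFamily ι} (c : 𝕂) (x : C00 F 𝕂) :
    (c • x).toFinsupp = c • x.toFinsupp := rfl

variable (𝕂)

instance C00.instNormedAddCommGroup (F : CombFamily ι) : NormedAddCommGroup (C00 F 𝕂) :=
  AddGroupNorm.toNormedAddCommGroup
    { toFun := fun x => combNorm 𝕂 F x.toFinsupp
      map_zero' := by
        refine le_antisymm (combNorm_le 𝕂 F _ ?_) ?_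
        · intro s _
          have : (0 : C00 F 𝕂).toFinsupp = 0 := rfl
          simp [this]
        · have := sum_le_combNorm 𝕂 F (0 : C00 F 𝕂).toFinsupp F.empty_mem
          simpa using this
      add_le' := by
        intro x y
        refine combNorm_le 𝕂 F _ ?_
        intro s hs
        rw [C00.toFinsupp_add]
        calc ∑ a ∈ s, ‖(x.toFinsupp + y.toFinsupp) a‖
            ≤ ∑ a ∈ s, (‖x.toFinsupp a‖ + ‖y.toFinsupp a‖) := by
              refine Finset.sum_le_sum ?_
              intro a _
              rw [Finsupp.add_apply]
              exact norm_add_le _ _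
          _ = (∑ a ∈ s, ‖x.toFinsupp a‖) + ∑ a ∈ s, ‖y.toFinsupp a‖ :=
              Finset.sum_add_distrib
          _ ≤ combNorm 𝕂 F x.toFinsupp + combNorm 𝕂 F y.toFinsupp :=
              add_le_add (sum_le_combNorm 𝕂 F _ hs) (sum_le_combNorm 𝕂 F _ hs)
      neg' := by
        intro x
        rw [C00.toFinsupp_neg]
        have hfun : (fun s : Finset ι => ∑ a ∈ s, ‖(-x.toFinsupp) a‖)
            = fun s : Finset ι => ∑ a ∈ s, ‖x.toFinsupp a‖ := by
          funext s
          refine Finset.sum_congr rfl fun a _ => ?_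
          rw [Finsupp.neg_apply, norm_neg]
        unfold combNorm normValues
        rw [hfun]
      eq_zero_of_map_eq_zero' := by
        intro x hx
        have hα : ∀ a : ι, x.toFinsupp a = 0 := by
          intro a
          have h1 : ‖x.toFinsupp a‖ ≤ combNorm 𝕂 F x.toFinsupp := by
            have := sum_le_combNorm 𝕂 F x.toFinsupp (F.singleton_mem a)
            simpa using this
          rw [hx] at h1
          exact norm_eq_zero.1 (le_antisymm h1 (norm_nonneg _))
        have : x.toFinsupp = 0 := Finsupp.ext hα
        exact this }

lemma C00.norm_def {F : CombFamily ι} (x : C00 F 𝕂) : ‖x‖ = combNorm 𝕂 F x.toFinsupp := rfl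

instance C00.instNormedSpace (F : CombFamily ι) : NormedSpace 𝕂 (C00 F 𝕂) where
  norm_smul_le c x := by
    rw [C00.norm_def, C00.norm_def, C00.toFinsupp_smul]
    refine combNorm_le 𝕂 F _ ?_
    intro s hs
    have : ∑ a ∈ s, ‖(c • x.toFinsupp) a‖ = ‖c‖ * ∑ a ∈ s, ‖x.toFinsupp a‖ := by
      rw [Finset.mul_sum]
      refine Finset.sum_congr rfl ?_
      intro a _
      rw [Finsupp.smul_apply]
      exact norm_smul c _
    rw [this]
    exact mul_le_mul_of_nonneg_left (sum_le_combNorm 𝕂 F _ hs) (norm_nonneg c)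

/-- The combinatorial Banach space `X_F`: the completion of `c₀₀(ι)` under the norm
induced by the family `F`. -/
def XF (F : CombFamily ι) (𝕂 : Type*) [RCLike 𝕂] : Type _ :=
  UniformSpace.Completion (C00 F 𝕂)

instance (F : CombFamily ι) : NormedAddCommGroup (XF F 𝕂) :=
  inferInstanceAs (NormedAddCommGroup (UniformSpace.Completion (C00 F 𝕂)))

instance (F : CombFamily ι) : NormedSpace 𝕂 (XF F 𝕂) :=
  inferInstanceAs (NormedSpace 𝕂 (UniformSpace.Completion (C00 F 𝕂)))

instance (F : CombFamily ι) : CompleteSpace (XF F 𝕂) :=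
  inferInstanceAs (CompleteSpace (UniformSpace.Completion (C00 F 𝕂)))

/-- The canonical unit vector basis `(e_a)` of the combinatorial space `X_F`. -/
def unitVec (F : CombFamily ι) (a : ι) : XF F 𝕂 :=
  (UniformSpace.Completion.toComplₗᵢ (𝕜 := 𝕂) (E := C00 F 𝕂))
    (C00.of F (Finsupp.single a 1))

/-- The coordinate functional `e_a^*` on `c₀₀`, as a continuous linear map. -/
def coordC00 (F : CombFamily ι) (a : ι) : C00 F 𝕂 →L[𝕂] 𝕂 :=
  LinearMap.mkContinuous
    { toFun := fun x => x.toFinsupp a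
      map_add' := fun _ _ => rfl
      map_smul' := fun _ _ => rfl } 1
    (by
      intro x
      have h1 : ‖x.toFinsupp a‖ ≤ combNorm 𝕂 F x.toFinsupp := by
        have := sum_le_combNorm 𝕂 F x.toFinsupp (F.singleton_mem a)
        simpa using this
      rw [C00.norm_def]
      show ‖x.toFinsupp a‖ ≤ 1 * _
      simpa using h1)

/-- The coordinate functional `e_a^*` of the dual of the combinatorial space `X_F`. -/
def coordFn (F : CombFamily ι) (a : ι) : StrongDual 𝕂 (XF F 𝕂) :=
  (coordC00 𝕂 F a).extend (UniformSpace.Completion.toComplL : C00 F 𝕂 →L[𝕂] XF F 𝕂)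

/-- An extreme point of a convex set `B`: a point of `B` which is not a proper convex
combination of two distinct points of `B`. -/
def IsExtremePoint {E : Type*} [AddCommGroup E] [Module 𝕂 E] (B : Set E) (x : E) : Prop :=
  x ∈ B ∧ ∀ x₁ ∈ B, ∀ x₂ ∈ B, ∀ t : ℝ, 0 < t → t < 1 →
    x = (t : 𝕂) • x₁ + ((1 - t : ℝ) : 𝕂) • x₂ → x₁ = x₂

/-!
For a maximal `s ∈ F`, the functional `e_s^* = ∑_{ξ ∈ s} e_ξ^*` is exposed in the dual ball by
`ψ ↦ re ψ(1_s)`, hence extreme, and `e_s^* → e_α^*` weak* as `s → {α}` through maximal sets.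
The coordinate map `ψ ↦ (ψ e_ξ)_ξ` is injective and weak*-continuous, and by Hahn–Banach it maps
the dual ball of `X_G` onto the closed convex hull of the sign vectors (unimodular on some
`s ∈ G`, zero elsewhere). By Milman's theorem the extreme points `T e_s^*` therefore have
sign-vector coordinates; these form a closed set since `G` is compact, so the weak* limit
`T e_α^*` has them too.
-/

open Filter Topology

section Milman

variable {E : Type*} [AddCommGroup E] [Module ℝ E] [TopologicalSpace E]

theorem IsCompact.convexJoin [ContinuousAdd E] [ContinuousSMul ℝ E] {s t : Set E}
    (hs : IsCompact s) (ht : IsCompact t) : IsCompact (_root_.convexJoin ℝ s t) := by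
  have : _root_.convexJoin ℝ s t =
      (fun p : (ℝ × E) × E => p.1.1 • p.1.2 + (1 - p.1.1) • p.2) ''
        ((Set.Icc 0 1 ×ˢ s) ×ˢ t) := by
    ext z
    simp only [mem_convexJoin, segment, Set.mem_image, Set.mem_prod, Set.mem_Icc, Prod.exists]
    constructor
    · rintro ⟨x, hx, y, hy, a, b, ha, hb, hab, rfl⟩
      exact ⟨a, x, y, ⟨⟨⟨ha, by linarith⟩, hx⟩, hy⟩, by rw [← hab, add_sub_cancel_left]⟩
    · rintro ⟨a, x, y, ⟨⟨⟨ha0, ha1⟩, hx⟩, hy⟩, rfl⟩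
      exact ⟨x, hx, y, hy, a, 1 - a, ha0, by linarith, by ring, rfl⟩
  rw [this]
  exact ((isCompact_Icc.prod hs).prod ht).image <|
    (continuous_fst.fst.smul continuous_fst.snd).add
      ((continuous_const.sub continuous_fst.fst).smul continuous_snd)

theorem isCompact_convexHull_biUnion [ContinuousAdd E] [ContinuousSMul ℝ E] {α : Type*}
    {A : α → Set E} (s : Finset α) (hA : ∀ i ∈ s, IsCompact (convexHull ℝ (A i))) :
    IsCompact (convexHull ℝ (⋃ i ∈ s, A i)) := by
  classical
  induction s using Finset.induction_on with
  | empty => simp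
  | insert i s _ ih =>
    have hAi := hA i (Finset.mem_insert_self i s)
    have hAs := ih fun j hj => hA j (Finset.mem_insert_of_mem hj)
    rw [Finset.set_biUnion_insert]
    rcases (A i).eq_empty_or_nonempty with hi | hi
    · simpa [hi] using hAs
    rcases (⋃ j ∈ s, A j).eq_empty_or_nonempty with hs | hs
    · simpa [hs] using hAi
    rw [convexHull_union hi hs]
    exact hAi.convexJoin hAs

/-- Cover `closure K` by finitely many translates `q + V`: then `closure (convexHull ℝ K)` is the
convex hull of the finitely many compact convex pieces `closure (convexHull ℝ (K ∩ (q + V)))`, so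
its extreme point `x` lies in one of them. -/
theorem exists_sub_mem_of_mem_extremePoints_closure_convexHull [IsTopologicalAddGroup E]
    [ContinuousSMul ℝ E] [T2Space E] {K : Set E} (hK : IsCompact (closure (convexHull ℝ K)))
    {x : E} (hx : x ∈ (closure (convexHull ℝ K)).extremePoints ℝ) {V : Set E} (hV : V ∈ 𝓝 0)
    (hVconv : Convex ℝ V) : ∃ q, ∃ d ∈ K, d - q ∈ V ∧ x - q ∈ closure V := by
  set U : E → Set E := fun q => {y | y - q ∈ V}
  have hU : ∀ q, U q ∈ 𝓝 q := fun q =>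
    (continuous_sub_right q).continuousAt.preimage_mem_nhds (by simpa using hV)
  have hKc : IsCompact (closure K) :=
    hK.of_isClosed_subset isClosed_closure (closure_mono (subset_convexHull ℝ K))
  obtain ⟨Q, hQK, hcover⟩ := hKc.elim_nhds_subcover U fun q _ => hU q
  set A : E → Set E := fun q => closure (convexHull ℝ (K ∩ U q))
  have hA_sub : ∀ q, A q ⊆ closure (convexHull ℝ K) := fun q =>
    closure_mono (convexHull_mono Set.inter_subset_left)
  have hA_near : ∀ q, A q ⊆ {y | y - q ∈ closure V} := by
    refine fun q => closure_minimal (convexHull_min (fun y hy => subset_closure hy.2) ?_)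
      (isClosed_closure.preimage (continuous_sub_right q))
    intro y hy z hz a b ha hb hab
    have : a • y + b • z - q = a • (y - q) + b • (z - q) := by
      linear_combination (norm := module) hab • q
    simpa only [Set.mem_ofPred_eq, this] using hVconv.closure hy hz ha hb hab
  have hJ : IsCompact (convexHull ℝ (⋃ q ∈ Q, A q)) :=
    isCompact_convexHull_biUnion Q fun q _ => by
      rw [(convex_convexHull ℝ _).closure.convexHull_eq]
      exact hK.of_isClosed_subset isClosed_closure (hA_sub q)
  have hKJ : K ⊆ ⋃ q ∈ Q, A q := fun y hy => by
    obtain ⟨q, hq, hyq⟩ := Set.mem_iUnion₂.1 (hcover (subset_closure hy))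
    exact Set.mem_iUnion₂.2 ⟨q, hq, subset_closure (subset_convexHull ℝ _ ⟨hy, hyq⟩)⟩
  have hJ_sub : convexHull ℝ (⋃ q ∈ Q, A q) ⊆ closure (convexHull ℝ K) :=
    convexHull_min (Set.iUnion₂_subset fun q _ => hA_sub q) (convex_convexHull ℝ K).closure
  have hxJ : x ∈ (convexHull ℝ (⋃ q ∈ Q, A q)).extremePoints ℝ :=
    inter_extremePoints_subset_extremePoints_of_subset hJ_sub
      ⟨closure_minimal (convexHull_min (hKJ.trans (subset_convexHull ℝ _))
        (convex_convexHull ℝ _)) hJ.isClosed hx.1, hx⟩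
  obtain ⟨q, hq, hxq⟩ := Set.mem_iUnion₂.1 (extremePoints_convexHull_subset hxJ)
  obtain ⟨d, hdU, hdK⟩ := mem_closure_iff_nhds.1 (hQK q hq) (U q) (hU q)
  exact ⟨q, d, hdK, hdU, hA_near q hxq⟩

/-- Milman's converse to the Krein–Milman theorem. -/
theorem mem_closure_of_mem_extremePoints_closure_convexHull [IsTopologicalAddGroup E]
    [ContinuousSMul ℝ E] [LocallyConvexSpace ℝ E] [T2Space E] {K : Set E}
    (hK : IsCompact (closure (convexHull ℝ K))) {x : E}
    (hx : x ∈ (closure (convexHull ℝ K)).extremePoints ℝ) : x ∈ closure K := by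
  rw [mem_closure_iff_nhds]
  intro N hN
  have hcont : Tendsto (fun p : E × E => x + (p.1 - p.2)) (𝓝 0 ×ˢ 𝓝 0) (𝓝 x) := by
    rw [← nhds_prod_eq]
    simpa using ((continuous_fst.sub continuous_snd).const_add x).tendsto ((0 : E), (0 : E))
  obtain ⟨W, hW, hWN⟩ := (eventually_prod_self_iff (r := fun u v => x + (u - v) ∈ N)).1
    (hcont.eventually_mem hN)
  obtain ⟨C, ⟨hC, hCclosed⟩, hCW⟩ := (closed_nhds_basis (0 : E)).mem_iff.1 hW
  obtain ⟨V, ⟨hV, hVconv⟩, hVC⟩ := (LocallyConvexSpace.convex_basis_zero ℝ E).mem_iff.1 hC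
  have hVW : closure V ⊆ W := (closure_minimal hVC hCclosed).trans hCW
  obtain ⟨q, d, hdK, hdV, hxV⟩ :=
    exists_sub_mem_of_mem_extremePoints_closure_convexHull hK hx hV hVconv
  have hd : x + ((d - q) - (x - q)) ∈ N := hWN _ (hVW (subset_closure hdV)) _ (hVW hxV)
  exact ⟨d, by simpa using hd, hdK⟩

end Milman

theorem mem_extremePoints_image_of_injective {E F : Type*} [AddCommGroup E] [Module ℝ E]
    [AddCommGroup F] [Module ℝ F] {f : E →ₗ[ℝ] F} (hf : Function.Injective f) {s : Set E} {x : E}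
    (hx : x ∈ s.extremePoints ℝ) : f x ∈ (f '' s).extremePoints ℝ := by
  refine ⟨Set.mem_image_of_mem f hx.1, ?_⟩
  rintro _ ⟨x₁, h₁, rfl⟩ _ ⟨x₂, h₂, rfl⟩ hseg
  obtain ⟨y, hy, hyx⟩ := (image_openSegment ℝ f.toAffineMap x₁ x₂).symm ▸ hseg
  exact congrArg f (hx.2 h₁ h₂ (hf hyx ▸ hy))

variable {𝕂}

theorem isExtremePoint_iff_mem_extremePoints {E : Type*} [AddCommGroup E] [Module 𝕂 E]
    [Module ℝ E] [IsScalarTower ℝ 𝕂 E] {B : Set E} {x : E} :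
    IsExtremePoint 𝕂 B x ↔ x ∈ B.extremePoints ℝ := by
  simp only [IsExtremePoint, ← RCLike.real_smul_eq_coe_smul]
  refine ⟨fun ⟨hx, h⟩ => ⟨hx, ?_⟩, fun hx => ⟨hx.1, ?_⟩⟩
  · rintro x₁ h₁ x₂ h₂ ⟨a, b, ha, hb, hab, rfl⟩
    obtain rfl := h x₁ h₁ x₂ h₂ a ha (by linarith) (by rw [← hab, add_sub_cancel_left])
    rw [← add_smul, hab, one_smul]
  · intro x₁ h₁ x₂ h₂ t ht0 ht1 hx_eq
    have hseg : x ∈ openSegment ℝ x₁ x₂ := ⟨t, 1 - t, ht0, by linarith, by ring, hx_eq.symm⟩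
    rw [(mem_extremePoints.1 hx).2 x₁ h₁ x₂ h₂ hseg |>.1,
      (mem_extremePoints.1 hx).2 x₁ h₁ x₂ h₂ hseg |>.2]

theorem RCLike.eq_one_of_norm_le_one_of_re_eq_one {z : 𝕂} (hz : ‖z‖ ≤ 1) (hre : RCLike.re z = 1) :
    z = 1 := by
  have hsq := RCLike.norm_sq_eq_def (z := z)
  have him : RCLike.im z = 0 := by nlinarith [norm_nonneg z, mul_self_nonneg (RCLike.im z)]
  exact RCLike.ext (by simpa using hre) (by simpa using him)

theorem RCLike.exists_norm_eq_one_mul_eq_norm (z : 𝕂) : ∃ u : 𝕂, ‖u‖ = 1 ∧ z * u = ‖z‖ := by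
  rcases eq_or_ne z 0 with rfl | hz
  · exact ⟨1, by simp, by simp⟩
  refine ⟨starRingEnd 𝕂 z / ‖z‖, ?_, ?_⟩
  · simp [norm_div, hz]
  · rw [mul_div_assoc', RCLike.mul_conj]
    field_simp [hz]

section CombinatorialSpace

variable {F : CombFamily ι}

@[simp]
theorem C00.toFinsupp_of (x : ι →₀ 𝕂) : (C00.of F x).toFinsupp = x := rfl

def toXF (F : CombFamily ι) : C00 F 𝕂 →L[𝕂] XF F 𝕂 := UniformSpace.Completion.toComplL

theorem norm_toXF (y : C00 F 𝕂) : ‖toXF F y‖ = ‖y‖ :=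
  UniformSpace.Completion.norm_coe y

theorem denseRange_toXF : DenseRange (toXF F (𝕂 := 𝕂)) :=
  UniformSpace.Completion.denseRange_coe

theorem coordFn_toXF (a : ι) (y : C00 F 𝕂) : coordFn 𝕂 F a (toXF F y) = y.toFinsupp a :=
  ContinuousLinearMap.extend_eq _ UniformSpace.Completion.denseRange_coe
    (UniformSpace.Completion.isUniformInducing_coe _) y

theorem unitVec_eq_toXF (a : ι) : unitVec 𝕂 F a = toXF F (C00.of F (Finsupp.single a 1)) := rfl

theorem toXF_single (a : ι) (z : 𝕂) :
    toXF F (C00.of F (Finsupp.single a z)) = z • unitVec 𝕂 F a := by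
  have : C00.of F (Finsupp.single a z) = z • C00.of F (Finsupp.single a (1 : 𝕂)) :=
    (Finsupp.smul_single_one a z).symm
  rw [this, map_smul]
  rfl

theorem toXF_of (y : ι →₀ 𝕂) :
    toXF F (C00.of F y) = ∑ c ∈ y.support, y c • unitVec 𝕂 F c := by
  conv_lhs => rw [← Finsupp.sum_single y]
  simp only [Finsupp.sum, ← toXF_single]
  exact map_sum (toXF F) _ _

theorem coordFn_unitVec (a b : ι) :
    coordFn 𝕂 F a (unitVec 𝕂 F b) = if b = a then 1 else 0 := by
  rw [unitVec_eq_toXF, coordFn_toXF, C00.toFinsupp_of, Finsupp.single_apply]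

theorem norm_unitVec_le_one (a : ι) : ‖unitVec 𝕂 F a‖ ≤ 1 := by
  rw [unitVec_eq_toXF, norm_toXF]
  refine combNorm_le 𝕂 F _ fun t _ => ?_
  simp only [C00.toFinsupp_of, Finsupp.single_apply, apply_ite, norm_one, norm_zero,
    Finset.sum_ite_eq]
  split_ifs <;> norm_num

theorem StrongDual.ext_unitVec {φ ψ : StrongDual 𝕂 (XF F 𝕂)}
    (h : ∀ ξ, φ (unitVec 𝕂 F ξ) = ψ (unitVec 𝕂 F ξ)) : φ = ψ := by
  refine ContinuousLinearMap.ext_on (s := Set.range (unitVec 𝕂 F)) ?_ (Set.forall_mem_range.2 h)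
  refine Dense.mono ?_ denseRange_toXF
  rintro _ ⟨y, rfl⟩
  rw [show y = C00.of F y.toFinsupp from rfl, toXF_of]
  exact Submodule.sum_mem _ fun c _ =>
    Submodule.smul_mem _ _ (Submodule.subset_span ⟨c, rfl⟩)

theorem sum_smul_coordFn_toXF (s : Finset ι) (θ : ι → 𝕂) (y : C00 F 𝕂) :
    (∑ ξ ∈ s, θ ξ • coordFn 𝕂 F ξ) (toXF F y) = ∑ ξ ∈ s, θ ξ * y.toFinsupp ξ := by
  simp [coordFn_toXF]

theorem sum_smul_coordFn_unitVec (s : Finset ι) (θ : ι → 𝕂) (c : ι) :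
    (∑ ξ ∈ s, θ ξ • coordFn 𝕂 F ξ) (unitVec 𝕂 F c) = if c ∈ s then θ c else 0 := by
  simp [coordFn_unitVec]

theorem norm_sum_smul_coordFn_le_one {s : Finset ι} (hs : s ∈ F.sets) {θ : ι → 𝕂}
    (hθ : ∀ ξ ∈ s, ‖θ ξ‖ ≤ 1) : ‖∑ ξ ∈ s, θ ξ • coordFn 𝕂 F ξ‖ ≤ 1 := by
  refine ContinuousLinearMap.opNorm_le_bound _ zero_le_one fun v => ?_
  refine denseRange_toXF.induction_on v
    (isClosed_le (by fun_prop) (continuous_const.mul continuous_norm)) fun y => ?_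
  rw [sum_smul_coordFn_toXF, norm_toXF, one_mul]
  calc ‖∑ ξ ∈ s, θ ξ * y.toFinsupp ξ‖ ≤ ∑ ξ ∈ s, ‖y.toFinsupp ξ‖ := by
        refine (norm_sum_le _ _).trans (Finset.sum_le_sum fun ξ hξ => ?_)
        rw [norm_mul]
        exact mul_le_of_le_one_left (norm_nonneg _) (hθ ξ hξ)
    _ ≤ ‖y‖ := sum_le_combNorm 𝕂 F _ hs

theorem norm_sum_coordFn_le_one {s : Finset ι} (hs : s ∈ F.sets) :
    ‖∑ ξ ∈ s, coordFn 𝕂 F ξ‖ ≤ 1 := by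
  simpa using norm_sum_smul_coordFn_le_one hs (θ := 1) (𝕂 := 𝕂) (by simp)

end CombinatorialSpace

theorem not_subset_of_mem_famMAX {F : Set (Finset ι)} (hF : IsHereditary F) {s t : Finset ι}
    (hs : s ∈ famMAX F) (ht : t ∈ F) {b : ι} (hbt : b ∈ t) (hbs : b ∉ s) : ¬ s ⊆ t := fun hst =>
  hbs <| (hs.2 _ (hF (Finset.insert_subset hbt hst) ht) (Finset.subset_insert b s)).symm ▸
    Finset.mem_insert_self b s

section ExposedPoints

variable {F : CombFamily ι}

theorem norm_sum_unitVec_add_smul_le (hF : IsHereditary F.sets) {s : Finset ι}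
    (hs : s ∈ famMAX F.sets) {b : ι} (hb : b ∉ s) {z : 𝕂} (hz : ‖z‖ ≤ 1) :
    ‖∑ ξ ∈ s, unitVec 𝕂 F ξ + z • unitVec 𝕂 F b‖ ≤ s.card := by
  have : toXF F (C00.of F (∑ ξ ∈ s, Finsupp.single ξ 1 + Finsupp.single b z)) =
      ∑ ξ ∈ s, unitVec 𝕂 F ξ + z • unitVec 𝕂 F b := by
    rw [← toXF_single]
    simp only [unitVec_eq_toXF, ← map_sum, ← map_add]
    rfl
  rw [← this, norm_toXF, C00.norm_def]
  refine combNorm_le 𝕂 F _ fun t ht => ?_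
  calc ∑ η ∈ t, ‖(C00.of F (∑ ξ ∈ s, Finsupp.single ξ 1 + Finsupp.single b z)).toFinsupp η‖
      ≤ ∑ η ∈ t, ((if η ∈ s then 1 else 0) + if b = η then 1 else 0) := by
        refine Finset.sum_le_sum fun η _ => ?_
        simp only [C00.toFinsupp_of, Finsupp.add_apply, Finsupp.finsetSum_apply,
          Finsupp.single_apply, Finset.sum_ite_eq']
        refine (norm_add_le _ _).trans (add_le_add ?_ ?_) <;> split_ifs <;> simp [hz]
    _ = (t.filter (· ∈ s)).card + if b ∈ t then 1 else 0 := by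
        rw [Finset.sum_add_distrib, Finset.sum_boole, Finset.sum_ite_eq]
    _ ≤ s.card := by
        rw [Finset.filter_mem_eq_inter]
        split_ifs with hbt
        · have := Finset.card_lt_card (Finset.ssubset_iff_subset_ne.2 ⟨Finset.inter_subset_right,
            fun h => not_subset_of_mem_famMAX hF hs ht hbt hb (Finset.inter_eq_right.1 h)⟩)
          exact_mod_cast this
        · simpa using Finset.card_le_card Finset.inter_subset_right

theorem norm_sum_unitVec_le (s : Finset ι) : ‖∑ ξ ∈ s, unitVec 𝕂 F ξ‖ ≤ s.card :=
  (norm_sum_le _ _).trans <| by simpa using Finset.sum_le_sum fun ξ _ => norm_unitVec_le_one ξ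

theorem norm_apply_unitVec_le {ψ : StrongDual 𝕂 (XF F 𝕂)} (hψ : ‖ψ‖ ≤ 1) (ξ : ι) :
    ‖ψ (unitVec 𝕂 F ξ)‖ ≤ 1 :=
  (ψ.le_opNorm _).trans (mul_le_one₀ hψ (norm_nonneg _) (norm_unitVec_le_one ξ))

theorem apply_unitVec_eq_one_of_card_le_re {ψ : StrongDual 𝕂 (XF F 𝕂)} (hψ : ‖ψ‖ ≤ 1)
    {s : Finset ι} (h : (s.card : ℝ) ≤ RCLike.re (ψ (∑ ξ ∈ s, unitVec 𝕂 F ξ))) :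
    ∀ ξ ∈ s, ψ (unitVec 𝕂 F ξ) = 1 := by
  have hle : ∀ ξ ∈ s, RCLike.re (ψ (unitVec 𝕂 F ξ)) ≤ 1 := fun ξ _ =>
    (RCLike.re_le_norm _).trans (norm_apply_unitVec_le hψ ξ)
  have hre := (Finset.sum_eq_sum_iff_of_le hle).1 <| le_antisymm (Finset.sum_le_sum hle) <| by
    simpa [map_sum] using h
  exact fun ξ hξ => RCLike.eq_one_of_norm_le_one_of_re_eq_one (norm_apply_unitVec_le hψ ξ)
    (hre ξ hξ)

/-- Testing `ψ` against `1_s + conj (ψ e_b) e_b`, a vector of norm `≤ |s|` by maximality of `s`. -/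
theorem apply_unitVec_eq_zero_of_card_le_re (hF : IsHereditary F.sets) {s : Finset ι}
    (hs : s ∈ famMAX F.sets) {ψ : StrongDual 𝕂 (XF F 𝕂)} (hψ : ‖ψ‖ ≤ 1)
    (h : (s.card : ℝ) ≤ RCLike.re (ψ (∑ ξ ∈ s, unitVec 𝕂 F ξ))) {b : ι} (hb : b ∉ s) :
    ψ (unitVec 𝕂 F b) = 0 := by
  set w := ψ (unitVec 𝕂 F b)
  have hw : ‖starRingEnd 𝕂 w‖ ≤ 1 := by simpa using norm_apply_unitVec_le hψ b
  have : (s.card : ℝ) + ‖w‖ ^ 2 ≤ s.card :=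
    calc (s.card : ℝ) + ‖w‖ ^ 2
        ≤ RCLike.re (ψ (∑ ξ ∈ s, unitVec 𝕂 F ξ + starRingEnd 𝕂 w • unitVec 𝕂 F b)) := by
          rw [map_add, map_smul, smul_eq_mul, RCLike.conj_mul, map_add]
          norm_cast
          simpa using h
      _ ≤ ‖ψ (∑ ξ ∈ s, unitVec 𝕂 F ξ + starRingEnd 𝕂 w • unitVec 𝕂 F b)‖ := RCLike.re_le_norm _
      _ ≤ ‖∑ ξ ∈ s, unitVec 𝕂 F ξ + starRingEnd 𝕂 w • unitVec 𝕂 F b‖ :=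
          (ψ.le_opNorm _).trans (mul_le_of_le_one_left (norm_nonneg _) hψ)
      _ ≤ s.card := norm_sum_unitVec_add_smul_le hF hs hb hw
  exact norm_eq_zero.1 (by nlinarith [norm_nonneg w])

theorem sum_coordFn_mem_exposedPoints (hF : IsHereditary F.sets) {s : Finset ι}
    (hs : s ∈ famMAX F.sets) :
    ∑ ξ ∈ s, coordFn 𝕂 F ξ ∈
      (Metric.closedBall (0 : StrongDual 𝕂 (XF F 𝕂)) 1).exposedPoints ℝ := by
  set v := ∑ ξ ∈ s, unitVec 𝕂 F ξ
  have hval : (∑ ξ ∈ s, coordFn 𝕂 F ξ) v = s.card := by simp [v, coordFn_unitVec]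
  refine ⟨mem_closedBall_zero_iff.2 (norm_sum_coordFn_le_one hs.1), RCLike.reCLM.comp
      ((ContinuousLinearMap.apply 𝕂 𝕂 v).restrictScalars ℝ), fun ψ hψ => ?_⟩
  rw [mem_closedBall_zero_iff] at hψ
  simp only [ContinuousLinearMap.comp_apply, ContinuousLinearMap.coe_restrictScalars',
    ContinuousLinearMap.apply_apply, RCLike.reCLM_apply, hval, RCLike.natCast_re]
  refine ⟨(RCLike.re_le_norm _).trans ((ψ.le_opNorm v).trans ?_), fun h => ?_⟩
  · exact (mul_le_of_le_one_left (norm_nonneg _) hψ).trans (norm_sum_unitVec_le s)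
  refine StrongDual.ext_unitVec fun c => ?_
  by_cases hc : c ∈ s
  · simp [hc, coordFn_unitVec, apply_unitVec_eq_one_of_card_le_re hψ h c hc]
  · simp [hc, coordFn_unitVec, apply_unitVec_eq_zero_of_card_le_re hF hs hψ h hc]

end ExposedPoints

theorem StrongDual.exists_finsupp_eq_sum_mul (f : StrongDual 𝕂 (ι → 𝕂)) :
    ∃ c : ι →₀ 𝕂, ∀ v : ι → 𝕂, f v = ∑ ξ ∈ c.support, c ξ * v ξ := by
  have hf : f.toLinearMap ∈ Submodule.span 𝕂 (Set.range fun ξ => LinearMap.proj ξ) :=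
    (LinearMap.mem_span_iff_continuous _).2 f.continuous
  obtain ⟨c, hc⟩ := Finsupp.mem_span_range_iff_exists_finsupp.1 hf
  refine ⟨c, fun v => ?_⟩
  rw [← ContinuousLinearMap.coe_coe f, ← hc]
  simp [Finsupp.sum]

section Coordinates

variable {G : CombFamily ι}

def coords (G : CombFamily ι) : StrongDual 𝕂 (XF G 𝕂) →ₗ[𝕂] ι → 𝕂 where
  toFun ψ ξ := ψ (unitVec 𝕂 G ξ)
  map_add' _ _ := rfl
  map_smul' _ _ := rfl

theorem coords_apply (ψ : StrongDual 𝕂 (XF G 𝕂)) (ξ : ι) :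
    coords G ψ ξ = ψ (unitVec 𝕂 G ξ) := rfl

theorem coords_injective : Function.Injective (coords (𝕂 := 𝕂) G) := fun _ _ h =>
  StrongDual.ext_unitVec (congrFun h)

theorem continuous_coords :
    Continuous fun φ : WeakDual 𝕂 (XF G 𝕂) => coords G (WeakDual.toStrongDual φ) :=
  continuous_pi fun ξ => WeakDual.eval_continuous (unitVec 𝕂 G ξ)

theorem coords_sum_smul_coordFn (s : Finset ι) (θ : ι → 𝕂) :
    coords G (∑ ξ ∈ s, θ ξ • coordFn 𝕂 G ξ) = fun c => if c ∈ s then θ c else 0 :=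
  funext fun c => sum_smul_coordFn_unitVec s θ c

variable (𝕂) in
/-- The coordinate vectors of the functionals `∑_{ξ ∈ s} θ_ξ e_ξ^*` with `s ∈ G`, `|θ_ξ| = 1`. -/
def signVectors (G : CombFamily ι) : Set (ι → 𝕂) :=
  {v | ∃ s ∈ G.sets, (∀ ξ ∈ s, ‖v ξ‖ = 1) ∧ ∀ ξ ∉ s, v ξ = 0}

theorem signVectors_subset_coords_image :
    signVectors 𝕂 G ⊆ coords G '' Metric.closedBall 0 1 := by
  rintro v ⟨s, hs, hv1, hv0⟩
  refine ⟨∑ ξ ∈ s, v ξ • coordFn 𝕂 G ξ, mem_closedBall_zero_iff.2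
    (norm_sum_smul_coordFn_le_one hs fun ξ hξ => (hv1 ξ hξ).le), ?_⟩
  rw [coords_sum_smul_coordFn]
  exact funext fun c => by split_ifs with hc <;> simp [hc, hv0]

theorem isCompact_coords_image_closedBall :
    IsCompact (coords G '' Metric.closedBall (0 : StrongDual 𝕂 (XF G 𝕂)) 1) :=
  (WeakDual.isCompact_closedBall 0 1).image continuous_coords

theorem convex_coords_image_closedBall :
    Convex ℝ (coords G '' Metric.closedBall (0 : StrongDual 𝕂 (XF G 𝕂)) 1) :=
  (convex_closedBall (0 : StrongDual 𝕂 (XF G 𝕂)) 1).linear_image ((coords G).restrictScalars ℝ)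

/-- Hahn–Banach: a functional separating `coords ψ` from the sign vectors only sees finitely many
coordinates `c`, and the norm of `c` in `X_G` is attained, up to signs, on a sign vector. -/
theorem coords_image_closedBall_subset :
    coords G '' Metric.closedBall 0 1 ⊆ closure (convexHull ℝ (signVectors 𝕂 G)) := by
  rintro _ ⟨ψ, hψ, rfl⟩
  by_contra hout
  obtain ⟨f, u, hfS, hfψ⟩ := RCLike.geometric_hahn_banach_closed_point (𝕜 := 𝕂)
    (convex_convexHull ℝ _).closure isClosed_closure hout
  obtain ⟨c, hc⟩ := f.exists_finsupp_eq_sum_mul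
  have hψc : f (coords G ψ) = ψ (toXF G (C00.of G c)) := by
    simp [hc, toXF_of, coords_apply]
  have hle : RCLike.re (f (coords G ψ)) ≤ ‖C00.of G c‖ := by
    rw [hψc, ← norm_toXF]
    exact (RCLike.re_le_norm _).trans
      ((ψ.le_opNorm _).trans (mul_le_of_le_one_left (norm_nonneg _) (mem_closedBall_zero_iff.1 hψ)))
  have hnorm : ‖C00.of G c‖ ≤ u := by
    refine combNorm_le 𝕂 G _ fun s hs => ?_
    choose ε hε1 hεc using fun ξ => RCLike.exists_norm_eq_one_mul_eq_norm (c ξ)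
    have hmem : (fun ξ => if ξ ∈ s then ε ξ else 0) ∈ signVectors 𝕂 G :=
      ⟨s, hs, fun ξ hξ => by simp [hξ, hε1], fun ξ hξ => by simp [hξ]⟩
    have hf := hfS _ (subset_closure (subset_convexHull ℝ _ hmem))
    have hsum : RCLike.re (f fun ξ => if ξ ∈ s then ε ξ else 0) = ∑ ξ ∈ s, ‖c ξ‖ := by
      rw [hc, map_sum, ← Finset.sum_subset (Finset.inter_subset_right (s₁ := s))
        fun ξ _ hξ => by simp_all, ← Finset.sum_subset (Finset.inter_subset_left (s₁ := s)
          (s₂ := c.support)) fun ξ _ hξ => by simp_all]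
      exact Finset.sum_congr rfl fun ξ hξ => by simp [(Finset.mem_inter.1 hξ).1, hεc]
    simpa [hsum] using hf.le
  linarith

theorem closure_convexHull_signVectors :
    closure (convexHull ℝ (signVectors 𝕂 G)) = coords G '' Metric.closedBall 0 1 :=
  (closure_minimal (convexHull_min signVectors_subset_coords_image convex_coords_image_closedBall)
    isCompact_coords_image_closedBall.isClosed).antisymm coords_image_closedBall_subset

theorem coords_mem_closure_signVectors {ψ : StrongDual 𝕂 (XF G 𝕂)}
    (hψ : ψ ∈ (Metric.closedBall 0 1).extremePoints ℝ) :
    coords G ψ ∈ closure (signVectors 𝕂 G) := by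
  refine mem_closure_of_mem_extremePoints_closure_convexHull ?_ ?_
  · rw [closure_convexHull_signVectors]
    exact isCompact_coords_image_closedBall
  · rw [closure_convexHull_signVectors]
    exact mem_extremePoints_image_of_injective (f := (coords G).restrictScalars ℝ)
      coords_injective hψ

end Coordinates

theorem signVectors_eq_inter_preimage_chiImg (G : CombFamily ι) :
    signVectors 𝕂 G = {v | ∀ ξ, v ξ = 0 ∨ ‖v ξ‖ = 1} ∩
      (fun v ξ => decide (v ξ ≠ 0)) ⁻¹' chiImg G.sets := by
  ext v
  constructor
  · rintro ⟨s, hs, h1, h0⟩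
    refine ⟨fun ξ => ?_, s, hs, funext fun ξ => ?_⟩ <;> by_cases hξ : ξ ∈ s
    · exact Or.inr (h1 ξ hξ)
    · exact Or.inl (h0 ξ hξ)
    · simp [chi, hξ, ← norm_pos_iff, h1 ξ hξ]
    · simp [chi, hξ, h0 ξ hξ]
  · rintro ⟨hv, s, hs, hchi⟩
    have hiff : ∀ ξ, ξ ∈ s ↔ v ξ ≠ 0 := fun ξ => decide_eq_decide.1 (congrFun hchi ξ)
    exact ⟨s, hs, fun ξ hξ => (hv ξ).resolve_left ((hiff ξ).1 hξ),
      fun ξ hξ => not_not.1 (mt (hiff ξ).2 hξ)⟩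

/-- No coordinate can move continuously between `0` and the unit circle. -/
theorem continuousOn_decide_ne_zero :
    ContinuousOn (fun (v : ι → 𝕂) ξ => decide (v ξ ≠ 0)) {v | ∀ ξ, v ξ = 0 ∨ ‖v ξ‖ = 1} :=
  continuousOn_pi.2 fun ξ v hv => by
    rw [ContinuousWithinAt, nhds_discrete, tendsto_pure]
    rcases hv ξ with h0 | h1
    · have : ∀ᶠ y in 𝓝 v, ‖y ξ‖ < 1 :=
        (continuous_apply ξ).norm.continuousAt.eventually_lt continuousAt_const (by simp [h0])
      filter_upwards [self_mem_nhdsWithin, nhdsWithin_le_nhds this] with y hyM hy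
      simp [(hyM ξ).resolve_right hy.ne, h0]
    · have hv0 : v ξ ≠ 0 := fun h => by simp [h] at h1
      filter_upwards [nhdsWithin_le_nhds ((continuous_apply ξ).continuousAt.eventually_ne hv0)]
        with y hy
      simp [hy, hv0]

theorem isClosed_signVectors {G : CombFamily ι} (hG : IsCompactFam G.sets) :
    IsClosed (signVectors 𝕂 G) := by
  have hM : IsClosed {v : ι → 𝕂 | ∀ ξ, v ξ = 0 ∨ ‖v ξ‖ = 1} := by
    simp only [Set.ofPred_forall, Set.ofPred_or]
    exact isClosed_iInter fun ξ => (isClosed_eq (continuous_apply ξ) continuous_const).union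
      (isClosed_eq (continuous_apply ξ).norm continuous_const)
  rw [signVectors_eq_inter_preimage_chiImg]
  exact continuousOn_decide_ne_zero.preimage_isClosed_of_isClosed hM hG

theorem tendsto_toWeakDual_of_denseRange {E D α : Type*} [NormedAddCommGroup E]
    [NormedSpace 𝕂 E] {l : Filter α} {Φ : α → StrongDual 𝕂 E} {C : ℝ} (hΦ : ∀ i, ‖Φ i‖ ≤ C)
    {d : D → E} (hd : DenseRange d) {φ : StrongDual 𝕂 E}
    (h : ∀ y, Tendsto (fun i => Φ i (d y)) l (𝓝 (φ (d y)))) :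
    Tendsto (fun i => StrongDual.toWeakDual (Φ i)) l (𝓝 (StrongDual.toWeakDual φ)) := by
  have hequi := (NormedSpace.equicontinuous_TFAE Φ).out 5 1
  rw [tendsto_iff_forall_eval_tendsto_topDualPairing]
  exact fun v => hd.induction_on v ((hequi.1 ⟨C, hΦ⟩).isClosed_setOfPred_tendsto φ.continuous) h

theorem tendsto_sum_coordFn {F : CombFamily ι} {α : Type*} {l : Filter α} {σ : α → Finset ι}
    (hσ : ∀ i, σ i ∈ F.sets) {a : ι} (h : Tendsto (fun i => chi (σ i)) l (𝓝 (chi {a}))) :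
    Tendsto (fun i => StrongDual.toWeakDual (∑ ξ ∈ σ i, coordFn 𝕂 F ξ)) l
      (𝓝 (StrongDual.toWeakDual (coordFn 𝕂 F a))) := by
  refine tendsto_toWeakDual_of_denseRange (fun i => norm_sum_coordFn_le_one (hσ i))
    denseRange_toXF fun y => tendsto_const_nhds.congr' ?_
  have hev : ∀ᶠ i in l, ∀ ξ ∈ insert a y.toFinsupp.support, ξ ∈ σ i ↔ ξ = a :=
    (eventually_all_finset _).2 fun ξ _ => by
      have := ((continuous_apply ξ).tendsto _).comp h
      rw [nhds_discrete, tendsto_pure] at this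
      filter_upwards [this] with i hi
      simpa [chi] using hi
  filter_upwards [hev] with i hi
  simp only [FunLike.coe_sum, Finset.sum_apply, coordFn_toXF]
  refine (Finset.sum_eq_single_of_mem a ((hi a (Finset.mem_insert_self _ _)).2 rfl)
    fun b hb hba => ?_).symm
  by_contra hyb
  exact hba ((hi b (Finset.mem_insert_of_mem (Finsupp.mem_support_iff.2 hyb))).1 hb)

theorem statement7_general {ι : Type*} {𝕂 : Type*} [RCLike 𝕂]
    (F G : CombFamily ι)
    (hFh : IsHereditary F.sets)
    (hGc : IsCompactFam G.sets)
    (hFmax : ∀ a : ι, chi ({a} : Finset ι) ∈ closure (chiImg (famMAX F.sets)))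
    (T : StrongDual 𝕂 (XF F 𝕂) →ₗ[𝕂] StrongDual 𝕂 (XF G 𝕂))
    (hTcont : Continuous fun φ : WeakDual 𝕂 (XF F 𝕂) =>
      StrongDual.toWeakDual (T (WeakDual.toStrongDual φ)))
    (hText : ∀ φ : StrongDual 𝕂 (XF F 𝕂),
      IsExtremePoint 𝕂 (Metric.closedBall (0 : StrongDual 𝕂 (XF F 𝕂)) 1) φ →
      IsExtremePoint 𝕂 (Metric.closedBall (0 : StrongDual 𝕂 (XF G 𝕂)) 1) (T φ)) :
    ∀ a : ι, ∃ s ∈ G.sets, ∃ θ : ι → 𝕂, (∀ ξ ∈ s, ‖θ ξ‖ = 1) ∧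
      T (coordFn 𝕂 F a) = ∑ ξ ∈ s, θ ξ • coordFn 𝕂 G ξ := by
  intro a
  have hS : IsClosed (signVectors 𝕂 G) := isClosed_signVectors hGc
  have hA : IsClosed {φ : WeakDual 𝕂 (XF F 𝕂) |
      coords G (T (WeakDual.toStrongDual φ)) ∈ signVectors 𝕂 G} :=
    hS.preimage (continuous_coords.comp hTcont)
  have hmax : ∀ s ∈ famMAX F.sets, coords G (T (∑ ξ ∈ s, coordFn 𝕂 F ξ)) ∈ signVectors 𝕂 G :=
    fun s hs => hS.closure_eq ▸ coords_mem_closure_signVectors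
      (isExtremePoint_iff_mem_extremePoints (𝕂 := 𝕂) |>.1 <| hText _ <|
        isExtremePoint_iff_mem_extremePoints.2 <|
        exposedPoints_subset_extremePoints (sum_coordFn_mem_exposedPoints hFh hs))
  have : (comap (fun s : famMAX F.sets => chi s.1) (𝓝 (chi {a}))).NeBot :=
    comap_neBot_iff.2 fun t ht => by
      obtain ⟨_, hts, s, hs, rfl⟩ := mem_closure_iff_nhds.1 (hFmax a) t ht
      exact ⟨⟨s, hs⟩, hts⟩
  obtain ⟨t, ht, hone, hzero⟩ := hA.mem_of_tendsto
    (tendsto_sum_coordFn (a := a) (fun s : famMAX F.sets => s.2.1) tendsto_comap)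
    (Eventually.of_forall fun s => hmax s.1 s.2)
  refine ⟨t, ht, coords G (T (coordFn 𝕂 F a)), hone, coords_injective ?_⟩
  rw [coords_sum_smul_coordFn]
  exact funext fun c => by split_ifs with hc; exacts [rfl, hzero c hc]

/-- Let `F`, `G` be compact hereditary families on an infinite cardinal such
that every singleton lies in the closure of `F^MAX`. If `T : X_F^* → X_G^*` is linear,
weak*-weak* continuous and maps extreme points of the dual unit ball to extreme points, then
each `T e_a^*` has the form `Σ_{ξ∈s_a} θ_ξ^a e_ξ^*` with `s_a ∈ G` and `|θ_ξ^a| = 1`. -/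
theorem statement7 {ι : Type*} [Infinite ι] {𝕂 : Type*} [RCLike 𝕂]
    (F G : CombFamily ι)
    (hFc : IsCompactFam F.sets) (hFh : IsHereditary F.sets)
    (hGc : IsCompactFam G.sets) (hGh : IsHereditary G.sets)
    (hFmax : ∀ a : ι, chi ({a} : Finset ι) ∈ closure (chiImg (famMAX F.sets)))
    (T : StrongDual 𝕂 (XF F 𝕂) →ₗ[𝕂] StrongDual 𝕂 (XF G 𝕂))
    (hTcont : Continuous fun φ : WeakDual 𝕂 (XF F 𝕂) =>
      StrongDual.toWeakDual (T (WeakDual.toStrongDual φ)))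
    (hText : ∀ φ : StrongDual 𝕂 (XF F 𝕂),
      IsExtremePoint 𝕂 (Metric.closedBall (0 : StrongDual 𝕂 (XF F 𝕂)) 1) φ →
      IsExtremePoint 𝕂 (Metric.closedBall (0 : StrongDual 𝕂 (XF G 𝕂)) 1) (T φ)) :
    ∀ a : ι, ∃ s ∈ G.sets, ∃ θ : ι → 𝕂, (∀ ξ ∈ s, ‖θ ξ‖ = 1) ∧
      T (coordFn 𝕂 F a) = ∑ ξ ∈ s, θ ξ • coordFn 𝕂 G ξ :=
  statement7_general F G hFh hGc hFmax T hTcont hText
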